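/- If a Motzkin tree is uniquely closable and typable (i.e., exactly one closed de Bruijn lambda term has it as skeleton, and some closed simply-typed de Bruijn term has it as skeleton), then every unary node l occurring in it has a leaf v as its immediate child; in particular, in the unique closed term with this skeleton every lambda binder binds exactly the subterm l(v(0)) (an identity combinator). -/

import Mathlib

/-- Motzkin trees (binary-unary trees): leaf `v`, unary `l`, binary `a`. -/
inductive Mot : Type
  | v : Mot
  | l : Mot → Mot
  | a : Mot → Mot → Mot
deriving DecidableEq

/-- Lambda terms in de Bruijn form. -/
inductive Lam : Type
  | v : Nat → Lam
  | l : Lam → Lam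
  | a : Lam → Lam → Lam
deriving DecidableEq

/-- `t` is closed at depth `d`. -/
def Lam.closedAt : Lam → Nat → Prop
  | .v i, d => i < d
  | .l t, d => t.closedAt (d + 1)
  | .a s t, d => s.closedAt d ∧ t.closedAt d

/-- The Motzkin-tree skeleton of a de Bruijn term. -/
def Lam.skel : Lam → Mot
  | .v _ => .v
  | .l t => .l t.skel
  | .a s t => .a s.skel t.skel

/-- A Motzkin tree is uniquely closable if exactly one closed term has it as skeleton. -/
def Mot.UniquelyClosable (X : Mot) : Prop := ∃! t : Lam, t.closedAt 0 ∧ t.skel = X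

/-- Simple types: base type `o` and arrow types. -/
inductive Ty : Type
  | o : Ty
  | arr : Ty → Ty → Ty
deriving DecidableEq

/-- Typing judgment `Γ ⊢ t : A` for de Bruijn terms. -/
inductive HasTy : List Ty → Lam → Ty → Prop
  | var (Γ : List Ty) (i : ℕ) (A : Ty) : Γ[i]? = some A → HasTy Γ (.v i) A
  | lam (Γ : List Ty) (t : Lam) (A B : Ty) :
      HasTy (A :: Γ) t B → HasTy Γ (.l t) (.arr A B)
  | app (Γ : List Ty) (s t : Lam) (A B : Ty) :
      HasTy Γ s (.arr A B) → HasTy Γ t A → HasTy Γ (.a s t) B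

/-- A Motzkin tree is typable if some closed simply-typed term has it as skeleton. -/
def Mot.Typable (X : Mot) : Prop :=
  ∃ (t : Lam) (A : Ty), t.closedAt 0 ∧ HasTy [] t A ∧ t.skel = X

/-- Every unary node `l` of the Motzkin tree has a leaf `v` as its immediate child. -/
def Mot.EveryLBindsLeaf : Mot → Prop
  | .v => True
  | .l t => t = .v
  | .a s t => s.EveryLBindsLeaf ∧ t.EveryLBindsLeaf

/-- Every lambda binder of the de Bruijn term forms the identity subterm `l(v(0))`. -/
def Lam.EveryLamIsId : Lam → Prop
  | .v _ => True
  | .l t => t = .v 0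
  | .a s t => s.EveryLamIsId ∧ t.EveryLamIsId

/-!
A leaf at binding depth `d ≥ 2` admits two different indices, so a tree that is uniquely closable
at depth `d ≥ 1` contains no unary node. Hence in a uniquely closable tree every `l` sits at
depth `0` and its body is uniquely closable at depth `1`: it is `l`-free, so its closed
completion is an application tree all of whose leaves are `v 0`. If it is not the single leaf it
contains a subterm `s (v 0)` with `s` an application of `v 0`'s; typing `v 0 : A` forces `s` to
have a type `A → T` no larger than `A`, which is impossible. So each `l` binds `v 0`.
-/

def Mot.UniquelyClosableAt (X : Mot) (d : ℕ) : Prop :=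
  ∃! t : Lam, t.closedAt d ∧ t.skel = X

def Mot.LFree : Mot → Prop
  | .v => True
  | .l _ => False
  | .a s t => s.LFree ∧ t.LFree

def Ty.size : Ty → ℕ
  | .o => 1
  | .arr A B => A.size + B.size + 1

section Typing

theorem HasTy.size_le_of_lFree {A : Ty} :
    ∀ {b : Lam} {T : Ty}, b.skel.LFree → HasTy [A] b T → T.size ≤ A.size
  | .v _, _, _, .var _ _ _ h => by
      rcases List.getElem?_eq_some_iff.1 h with ⟨hi, rfl⟩
      simp only [List.length_singleton, Nat.lt_one_iff] at hi
      subst hi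
      rfl
  | .a _ _, _, hb, .app _ _ _ _ _ hs _ => by
      have := HasTy.size_le_of_lFree hb.1 hs
      simp only [Ty.size] at this
      omega

theorem HasTy.not_app_of_lFree {A : Ty} {s : Lam} (hs : s.skel.LFree) :
    ∀ {u : Lam} {T : Ty}, u.skel.LFree → ¬ HasTy [A] (.a s u) T
  | .v _, _, _, .app _ _ _ _ _ hsty (.var _ _ _ h) => by
      rcases List.getElem?_eq_some_iff.1 h with ⟨hi, rfl⟩
      simp only [List.length_singleton, Nat.lt_one_iff] at hi
      subst hi
      have := HasTy.size_le_of_lFree hs hsty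
      simp only [Ty.size, List.getElem_cons_zero] at this
      omega
  | .a _ _, _, hu, .app _ _ _ _ _ _ huty => HasTy.not_app_of_lFree hu.1 hu.2 huty

end Typing

section Closability

theorem Lam.exists_ne_skel_eq_of_two_le :
    ∀ (u : Lam) {e : ℕ}, 2 ≤ e → u.closedAt e →
      ∃ u' : Lam, u'.closedAt e ∧ u'.skel = u.skel ∧ u' ≠ u
  | .v i, e, he, _ => by
      refine ⟨.v (if i = 0 then 1 else 0), ?_, rfl, ?_⟩
      · show (if i = 0 then 1 else 0) < e
        split <;> omega
      · intro h
        have := Lam.v.inj h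
        split at this <;> omega
  | .l t, e, he, hc => by
      obtain ⟨t', hc', hs, hne⟩ := t.exists_ne_skel_eq_of_two_le (e := e + 1) (by omega) hc
      exact ⟨.l t', hc', congrArg Mot.l hs, fun h => hne (Lam.l.inj h)⟩
  | .a s t, e, he, hc => by
      obtain ⟨s', hc', hs, hne⟩ := s.exists_ne_skel_eq_of_two_le he hc.1
      exact ⟨.a s' t, ⟨hc', hc.2⟩, congrArg (Mot.a · t.skel) hs,
        fun h => hne (Lam.a.inj h).1⟩

theorem Mot.not_uniquelyClosableAt_of_two_le (X : Mot) {e : ℕ} (he : 2 ≤ e) :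
    ¬ X.UniquelyClosableAt e := by
  rintro ⟨u, ⟨hc, rfl⟩, huniq⟩
  obtain ⟨u', hc', hs, hne⟩ := u.exists_ne_skel_eq_of_two_le he hc
  exact hne (huniq u' ⟨hc', hs⟩)

theorem Mot.UniquelyClosableAt.of_l {Y : Mot} {e : ℕ} (h : (Mot.l Y).UniquelyClosableAt e) :
    Y.UniquelyClosableAt (e + 1) := by
  obtain ⟨u, ⟨hc, hs⟩, huniq⟩ := h
  cases u with
  | l b =>
    refine ⟨b, ⟨hc, Mot.l.inj hs⟩, fun y hy => ?_⟩
    exact Lam.l.inj (huniq (.l y) ⟨hy.1, congrArg Mot.l hy.2⟩)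
  | v | a => cases hs

theorem Mot.UniquelyClosableAt.of_a {Y Z : Mot} {e : ℕ}
    (h : (Mot.a Y Z).UniquelyClosableAt e) :
    Y.UniquelyClosableAt e ∧ Z.UniquelyClosableAt e := by
  obtain ⟨u, ⟨hc, hs⟩, huniq⟩ := h
  cases u with
  | a s t =>
    obtain ⟨rfl, rfl⟩ := Mot.a.inj hs
    refine ⟨⟨s, ⟨hc.1, rfl⟩, fun y hy => ?_⟩, ⟨t, ⟨hc.2, rfl⟩, fun y hy => ?_⟩⟩
    · exact (Lam.a.inj (huniq (.a y t) ⟨⟨hy.1, hc.2⟩, congrArg (Mot.a · t.skel) hy.2⟩)).1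
    · exact (Lam.a.inj (huniq (.a s y) ⟨⟨hc.1, hy.1⟩, congrArg (Mot.a s.skel) hy.2⟩)).2
  | v | l => cases hs

theorem Mot.UniquelyClosableAt.lFree :
    ∀ {X : Mot} {e : ℕ}, 1 ≤ e → X.UniquelyClosableAt e → X.LFree
  | .v, _, _, _ => trivial
  | .l Y, e, _, h => Y.not_uniquelyClosableAt_of_two_le (by omega) h.of_l
  | .a _ _, _, he, h => ⟨h.of_a.1.lFree he, h.of_a.2.lFree he⟩

end Closability

theorem Lam.everyLamIsId_of_hasTy :
    ∀ {t : Lam} {A : Ty}, HasTy [] t A → t.skel.UniquelyClosableAt 0 → t.EveryLamIsId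
  | .v _, _, _, _ => trivial
  | .l b, _, .lam _ _ _ _ hb, hu => by
      have hbu : b.skel.UniquelyClosableAt 1 := hu.of_l
      have hbl : b.skel.LFree := hbu.lFree le_rfl
      show b = .v 0
      match b, hb, hbl with
      | .v _, .var _ _ _ h, _ => simpa using (List.getElem?_eq_some_iff.1 h).1
      | .a _ _, hb, hbl => exact absurd hb (HasTy.not_app_of_lFree hbl.1 hbl.2)
  | .a _ _, _, .app _ _ _ _ _ hs hu', hu =>
      ⟨Lam.everyLamIsId_of_hasTy hs hu.of_a.1, Lam.everyLamIsId_of_hasTy hu' hu.of_a.2⟩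

theorem Lam.EveryLamIsId.skel : ∀ {t : Lam}, t.EveryLamIsId → t.skel.EveryLBindsLeaf
  | .v _, _ => trivial
  | .l _, rfl => rfl
  | .a _ _, h => ⟨h.1.skel, h.2.skel⟩

theorem stmt17 (X : Mot) (hu : X.UniquelyClosable) (ht : X.Typable) :
    X.EveryLBindsLeaf ∧
    ∀ t : Lam, t.closedAt 0 → t.skel = X → t.EveryLamIsId := by
  obtain ⟨t₀, A, hc₀, hty, rfl⟩ := ht
  have hId : t₀.EveryLamIsId := Lam.everyLamIsId_of_hasTy hty hu
  refine ⟨hId.skel, fun t hc hs => ?_⟩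
  rw [hu.unique ⟨hc, hs⟩ ⟨hc₀, rfl⟩]
  exact hId
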